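/- Let α : ℤ^ℕ → ℝ ∖ ℚ be any order-preserving homeomorphism from ℤ^ℕ (with the lexicographic order and the product topology) onto the set of irrational numbers (with the order and subspace topology from ℝ). Then the set {(t, α(s)) : (t, s) ∈ J(𝓕)} ⊆ ℝ² is a straight brush. -/
import Mathlib


open Set Filter Topology OnePoint

noncomputable section

/-- The space of external addresses: integer sequences `s₀ s₁ s₂ …`. -/
abbrev Addr : Type := ℕ → ℤ

/-- The one-sided shift on external addresses. -/
def shift (s : Addr) : Addr := fun n => s (n + 1)

/-- The model map `𝓕(t, s) = (F(t) − 2π|s₁|, σ(s))`, where `F(t) = eᵗ − 1`. -/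
def Fmodel : ℝ × Addr → ℝ × Addr :=
  fun x => (Real.exp x.1 - 1 - 2 * Real.pi * |(x.2 1 : ℝ)|, shift x.2)

/-- The model Julia set `J(𝓕)`: points whose forward orbit stays in `[0,∞) × ℤ^ℕ`. -/
def JF : Set (ℝ × Addr) := {x | ∀ n : ℕ, 0 ≤ (Fmodel^[n] x).1}

/-- The model escaping set `I(𝓕)`. -/
def IF : Set (ℝ × Addr) :=
  {x | x ∈ JF ∧ Tendsto (fun n => (Fmodel^[n] x).1) atTop atTop}

/-- An address `s` is exponentially bounded if `(t, s) ∈ J(𝓕)` for some `t`. -/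
def ExpBounded (s : Addr) : Prop := ∃ t : ℝ, (t, s) ∈ JF

/-- The minimal potential `t_s = min {t ≥ 0 : (t, s) ∈ J(𝓕)}` of an address `s`. -/
def tmin (s : Addr) : ℝ := sInf {t | (t, s) ∈ JF}

/-- An exponentially bounded address `s` is fast if the endpoint `(t_s, s)` escapes. -/
def Fast (s : Addr) : Prop := ExpBounded s ∧ (tmin s, s) ∈ IF

/-- The set `Ẽ(𝓕)` of escaping endpoints of the model: the points `(t_s, s)` for fast `s`. -/
def escEndF : Set (ℝ × Addr) := {x | ∃ s : Addr, Fast s ∧ x = (tmin s, s)}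

/-- The inverse `F⁻¹(t) = log(1 + t)` of `F(t) = eᵗ − 1`. -/
def Finv (t : ℝ) : ℝ := Real.log (1 + t)

/-- A straight brush: a closed subset of `{(y, α) : y ≥ 0, α irrational}` satisfying
hairiness and density, witnessed by the function `α ↦ t_α ∈ [0, ∞]`. -/
def IsStraightBrush (B : Set (ℝ × ℝ)) : Prop :=
  ∃ tfun : ℝ → EReal,
    (∀ α : ℝ, 0 ≤ tfun α) ∧
    (∀ t α : ℝ, (t, α) ∈ B ↔ Irrational α ∧ tfun α ≤ (t : EReal)) ∧
    Dense {α : ℝ | tfun α < ⊤} ∧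
    (∀ α : ℝ, tfun α < ⊤ →
      (∃ β : ℕ → ℝ, StrictMono β ∧ Tendsto β atTop (𝓝 α) ∧ (∀ n, β n < α) ∧
        Tendsto (fun n => tfun (β n)) atTop (𝓝 (tfun α))) ∧
      (∃ γ : ℕ → ℝ, StrictAnti γ ∧ Tendsto γ atTop (𝓝 α) ∧ (∀ n, α < γ n) ∧
        Tendsto (fun n => tfun (γ n)) atTop (𝓝 (tfun α)))) ∧
    IsClosed B

/-- Strict lexicographic order on external addresses. -/
def lexLt (a b : Addr) : Prop := ∃ n : ℕ, (∀ m : ℕ, m < n → a m = b m) ∧ a n < b n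

namespace Brush

noncomputable def G (x : ℝ) : ℝ := Real.exp x - 1

lemma G_mono : Monotone G := fun a b h => by
  simp only [G]; have := Real.exp_le_exp.2 h; linarith

lemma le_G (x : ℝ) : x ≤ G x := by
  have := Real.add_one_le_exp x; simp only [G]; linarith

lemma G_nonneg {x : ℝ} (hx : 0 ≤ x) : 0 ≤ G x := le_trans hx (le_G x)

lemma Giter_nonneg {x : ℝ} (hx : 0 ≤ x) (n : ℕ) : 0 ≤ G^[n] x := by
  induction n with
  | zero => simpa
  | succ n ih => rw [Function.iterate_succ_apply']; exact G_nonneg ih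

lemma Giter_mono (n : ℕ) : Monotone (G^[n]) := G_mono.iterate n

lemma G_superadd {a d : ℝ} (ha : 0 ≤ a) (hd : 0 ≤ d) : G a + G d ≤ G (a + d) := by
  simp only [G, Real.exp_add]
  nlinarith [Real.one_le_exp ha, Real.one_le_exp hd]

lemma G_sub_mono {a b : ℝ} (ha : 0 ≤ a) (hab : a ≤ b) : G a - a ≤ G b - b := by
  simp only [G]
  have h1 : Real.exp a * ((b - a) + 1) ≤ Real.exp a * Real.exp (b - a) := by
    have := Real.add_one_le_exp (b - a)
    nlinarith [Real.exp_pos a]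
  rw [← Real.exp_add] at h1
  have h2 : a + (b - a) = b := by ring
  rw [h2] at h1
  nlinarith [Real.one_le_exp ha]

lemma Giter_lower {d : ℝ} (hd : 0 ≤ d) (n : ℕ) : d + n * (G d - d) ≤ G^[n] d := by
  induction n with
  | zero => simp
  | succ n ih =>
    rw [Function.iterate_succ_apply']
    have hGd : 0 ≤ G d - d := by linarith [le_G d]
    have h1 : d ≤ G^[n] d := by
      have : (0:ℝ) ≤ n * (G d - d) := by positivity
      linarith
    have h2 := G_sub_mono hd h1
    have h3 := le_G (G^[n] d)
    push_cast
    nlinarith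

noncomputable def Tn (n : ℕ) (t : ℝ) (s : Addr) : ℝ := (Fmodel^[n] (t, s)).1

lemma iter_snd (n : ℕ) (x : ℝ × Addr) : (Fmodel^[n] x).2 = fun m => x.2 (m + n) := by
  induction n with
  | zero => simp
  | succ n ih =>
    rw [Function.iterate_succ_apply']
    show shift (Fmodel^[n] x).2 = _
    rw [ih]
    funext m
    have he : m + 1 + n = m + (n + 1) := by omega
    show x.2 (m + 1 + n) = x.2 (m + (n + 1))
    rw [he]

lemma Tn_zero (t : ℝ) (s : Addr) : Tn 0 t s = t := rfl

lemma Tn_succ (n : ℕ) (t : ℝ) (s : Addr) :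
    Tn (n+1) t s = G (Tn n t s) - 2 * Real.pi * |(s (n+1) : ℝ)| := by
  simp only [Tn, Function.iterate_succ_apply', Fmodel, G, iter_snd]
  norm_num [Nat.add_comm]

lemma mem_JF {t : ℝ} {s : Addr} : (t, s) ∈ JF ↔ ∀ n, 0 ≤ Tn n t s := Iff.rfl

lemma Tn_mono {t t' : ℝ} (h : t ≤ t') (s : Addr) (n : ℕ) : Tn n t s ≤ Tn n t' s := by
  induction n with
  | zero => simpa [Tn_zero]
  | succ n ih => rw [Tn_succ, Tn_succ]; have := G_mono ih; linarith

lemma Tn_congr {s s' : Addr} (t : ℝ) :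
    ∀ n, (∀ m, 1 ≤ m → m ≤ n → s' m = s m) → Tn n t s' = Tn n t s := by
  intro n
  induction n with
  | zero => intro _; rfl
  | succ n ih =>
    intro h
    rw [Tn_succ, Tn_succ, ih (fun m h1 h2 => h m h1 (h2.trans (Nat.le_succ n))),
      h (n+1) (by omega) le_rfl]

lemma Tn_gap {t δ : ℝ} {s : Addr} (h : ∀ n, 0 ≤ Tn n t s) (hδ : 0 ≤ δ) :
    ∀ n, Tn n t s + G^[n] δ ≤ Tn n (t + δ) s := by
  intro n
  induction n with
  | zero => simp [Tn_zero]
  | succ n ih =>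
    rw [Tn_succ, Tn_succ, Function.iterate_succ_apply']
    have h1 := G_superadd (h n) (Giter_nonneg hδ n)
    have h2 := G_mono ih
    linarith

lemma Tn_le_Giter (t : ℝ) (s : Addr) : ∀ n, Tn n t s ≤ G^[n] t := by
  intro n
  induction n with
  | zero => simp [Tn_zero]
  | succ n ih =>
    rw [Tn_succ, Function.iterate_succ_apply']
    have := G_mono ih
    have : 0 ≤ 2 * Real.pi * |(s (n+1) : ℝ)| := by positivity
    linarith [G_mono ih]

lemma entry_bound {t : ℝ} {s : Addr} (h : (t, s) ∈ JF) (n : ℕ) :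
    2 * Real.pi * |(s (n+1) : ℝ)| ≤ G^[n+1] t := by
  have h1 := (mem_JF.1 h) (n+1)
  rw [Tn_succ] at h1
  have h2 := G_mono (Tn_le_Giter t s n)
  have h3 : G^[n+1] t = G (G^[n] t) := Function.iterate_succ_apply' G n t
  rw [h3]
  linarith

lemma JF_nonneg {t : ℝ} {s : Addr} (h : (t, s) ∈ JF) : 0 ≤ t := mem_JF.1 h 0

lemma JF_up {t t' : ℝ} {s : Addr} (h : (t, s) ∈ JF) (htt : t ≤ t') : (t', s) ∈ JF :=
  mem_JF.2 fun n => (mem_JF.1 h n).trans (Tn_mono htt s n)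

lemma continuous_Fmodel : Continuous Fmodel := by
  refine Continuous.prodMk ?_ ?_
  · have h1 : Continuous fun x : ℝ × Addr => x.2 1 := (continuous_apply 1).comp continuous_snd
    have h2 : Continuous fun z : ℤ => 2 * Real.pi * |(z : ℝ)| := continuous_of_discreteTopology
    exact ((Real.continuous_exp.comp continuous_fst).sub continuous_const).sub (h2.comp h1)
  · exact continuous_pi fun n => (continuous_apply (n+1)).comp continuous_snd

lemma isClosed_JF : IsClosed JF := by
  have h : JF = ⋂ n, (fun x : ℝ × Addr => (Fmodel^[n] x).1) ⁻¹' Ici 0 := by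
    ext x; simp [JF, mem_Ici]
  rw [h]
  exact isClosed_iInter fun n =>
    IsClosed.preimage (continuous_fst.comp (continuous_Fmodel.iterate n)) isClosed_Ici

lemma bddBelow_S (s : Addr) : BddBelow {t | (t, s) ∈ JF} := ⟨0, fun t ht => JF_nonneg ht⟩

lemma isClosed_S (s : Addr) : IsClosed {t | (t, s) ∈ JF} := by
  have : {t | (t, s) ∈ JF} = (fun t : ℝ => (t, s)) ⁻¹' JF := rfl
  rw [this]
  exact isClosed_JF.preimage (continuous_id.prodMk continuous_const)

lemma tmin_mem {s : Addr} (hs : ExpBounded s) : (tmin s, s) ∈ JF :=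
  (isClosed_S s).csInf_mem hs (bddBelow_S s)

lemma tmin_nonneg {s : Addr} (hs : ExpBounded s) : 0 ≤ tmin s :=
  le_csInf hs fun t ht => JF_nonneg ht

lemma tmin_le {s : Addr} {t : ℝ} (h : (t, s) ∈ JF) : tmin s ≤ t := csInf_le (bddBelow_S s) h

lemma expBounded_of_bdd {s : Addr} {N : ℝ} (hN : ∀ m, |(s m : ℝ)| ≤ N) : ExpBounded s := by
  have hN0 : 0 ≤ N := le_trans (abs_nonneg _) (hN 0)
  set t : ℝ := 8 * (N + 1) with ht
  have ht0 : 0 ≤ t := by positivity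
  have hsq : Real.exp t = Real.exp (t/2) * Real.exp (t/2) := by
    rw [← Real.exp_add]; ring_nf
  have key : t + 2 * Real.pi * N ≤ G t := by
    have h1 := Real.add_one_le_exp (t/2)
    have hpi : Real.pi ≤ 4 := by linarith [Real.pi_le_four]
    have h2 : (t/2 + 1) * (t/2 + 1) ≤ Real.exp t := by
      rw [hsq]
      have h3 : (0:ℝ) ≤ t/2 + 1 := by linarith
      exact mul_le_mul h1 h1 h3 (Real.exp_pos _).le
    simp only [G]
    nlinarith
  have hTn : ∀ n, t ≤ Tn n t s := by
    intro n
    induction n with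
    | zero => simp [Tn_zero]
    | succ n ih =>
      rw [Tn_succ]
      have h4 := G_mono ih
      have h5 : 2 * Real.pi * |(s (n+1) : ℝ)| ≤ 2 * Real.pi * N := by
        have := hN (n+1); nlinarith [Real.pi_pos]
      linarith
  exact ⟨t, mem_JF.2 fun n => le_trans ht0 (hTn n)⟩

/-- Perturbed address: agrees with `s` below `k`, is `s k + e` at `k`, `0` above. -/
def pert (s : Addr) (e : ℤ) (k : ℕ) : Addr :=
  fun m => if m < k then s m else if m = k then s k + e else 0

lemma pert_bdd (s : Addr) {e : ℤ} (he : |e| ≤ 1) (k : ℕ) :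
    ∀ m, |(pert s e k m : ℝ)| ≤ (∑ j ∈ Finset.range (k+1), |(s j : ℝ)|) + 1 := by
  intro m
  have hsum : ∀ j, j ≤ k → |(s j : ℝ)| ≤ ∑ j ∈ Finset.range (k+1), |(s j : ℝ)| := by
    intro j hj
    exact Finset.single_le_sum (f := fun j => |(s j : ℝ)|) (fun i _ => abs_nonneg _)
      (Finset.mem_range.2 (by omega))
  have hnn : (0:ℝ) ≤ ∑ j ∈ Finset.range (k+1), |(s j : ℝ)| :=
    Finset.sum_nonneg fun i _ => abs_nonneg _
  unfold pert
  split_ifs with h1 h2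
  · linarith [hsum m (by omega)]
  · push_cast
    have h3 : |(s k : ℝ) + (e : ℝ)| ≤ |(s k : ℝ)| + |(e : ℝ)| := abs_add_le _ _
    have h4 : |(e : ℝ)| ≤ 1 := by
      have : ((|e| : ℤ) : ℝ) ≤ 1 := by exact_mod_cast he
      rwa [Int.cast_abs] at this
    subst h2
    linarith [hsum m le_rfl]
  · simp; linarith

lemma pert_tendsto (s : Addr) (e : ℤ) :
    Tendsto (fun k => pert s e k) atTop (𝓝 s) := by
  rw [tendsto_pi_nhds]
  intro m
  refine tendsto_const_nhds.congr' ?_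
  filter_upwards [eventually_gt_atTop m] with k hk
  simp [pert, hk]

lemma JF_pert {s : Addr} {t : ℝ} (hJF : (t, s) ∈ JF) {δ : ℝ} (hδ : 0 < δ)
    {e : ℤ} (he : |e| ≤ 1) :
    ∃ K : ℕ, ∀ k ≥ K, (t + δ, pert s e k) ∈ JF := by
  have hc : 0 < G δ - δ := by
    have := Real.add_one_lt_exp (ne_of_gt hδ); simp only [G]; linarith
  obtain ⟨K, hK⟩ := exists_nat_ge (2 * Real.pi / (G δ - δ))
  refine ⟨K, fun k hk => ?_⟩
  have hGk : 2 * Real.pi ≤ G^[k] δ := by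
    have h1 := Giter_lower hδ.le k
    have h2 : (K:ℝ) ≤ (k:ℝ) := Nat.cast_le.2 hk
    have h3 := (div_le_iff₀ hc).1 (hK.trans h2)
    linarith
  have hgap := Tn_gap (mem_JF.1 hJF) hδ.le
  have hlt : ∀ n < k, Tn n (t+δ) (pert s e k) = Tn n (t+δ) s := by
    intro n hn
    refine Tn_congr _ n fun m h1 h2 => ?_
    simp [pert, show m < k by omega]
  have hpk : |(pert s e k k : ℝ)| ≤ |(s k : ℝ)| + 1 := by
    have h4 : |(e : ℝ)| ≤ 1 := by
      have : ((|e| : ℤ) : ℝ) ≤ 1 := by exact_mod_cast he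
      rwa [Int.cast_abs] at this
    simp only [pert, lt_irrefl, if_false, if_pos rfl]
    push_cast
    calc |(s k : ℝ) + (e:ℝ)| ≤ |(s k : ℝ)| + |(e:ℝ)| := abs_add_le _ _
      _ ≤ _ := by linarith
  have hatk : 0 ≤ Tn k (t+δ) (pert s e k) := by
    rcases Nat.eq_zero_or_pos k with hk0 | hk0
    · subst hk0
      have := JF_nonneg hJF
      simp only [Tn_zero]; linarith
    · obtain ⟨j, rfl⟩ : ∃ j, k = j + 1 := ⟨k - 1, by omega⟩
      rw [Tn_succ, hlt j (by omega)]
      have e1 : Tn (j+1) (t+δ) s = G (Tn j (t+δ) s) - 2 * Real.pi * |(s (j+1) : ℝ)| :=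
        Tn_succ j (t+δ) s
      have e2 : 0 ≤ Tn (j+1) t s := mem_JF.1 hJF (j+1)
      have e3 := hgap (j+1)
      have e4 : 2 * Real.pi * |(pert s e (j+1) (j+1) : ℝ)| ≤
          2 * Real.pi * (|(s (j+1) : ℝ)| + 1) := by
        nlinarith [Real.pi_pos, hpk]
      nlinarith [Real.pi_pos]
  have habove : ∀ d, 0 ≤ Tn (k + d) (t+δ) (pert s e k) := by
    intro d
    induction d with
    | zero => simpa using hatk
    | succ d ih =>
      have e1 : k + (d+1) = (k + d) + 1 := by omega
      rw [e1, Tn_succ]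
      have e2 : pert s e k (k + d + 1) = 0 := by
        simp [pert]; omega
      rw [e2]
      have := le_G (Tn (k+d) (t+δ) (pert s e k))
      simp only [Int.cast_zero, abs_zero, mul_zero]
      linarith
  refine mem_JF.2 fun n => ?_
  rcases lt_or_ge n k with hn | hn
  · rw [hlt n hn]
    have := hgap n
    have := mem_JF.1 hJF n
    have := Giter_nonneg hδ.le n
    linarith
  · obtain ⟨d, rfl⟩ : ∃ d, n = k + d := ⟨n - k, by omega⟩
    exact habove d

lemma pert_expBounded (s : Addr) {e : ℤ} (he : |e| ≤ 1) (k : ℕ) : ExpBounded (pert s e k) :=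
  expBounded_of_bdd (pert_bdd s he k)

lemma tmin_tendsto {s : Addr} (hs : ExpBounded s) {e : ℤ} (he : |e| ≤ 1) :
    Tendsto (fun k => tmin (pert s e k)) atTop (𝓝 (tmin s)) := by
  have hmem := tmin_mem hs
  rw [tendsto_order]
  constructor
  · intro a ha
    by_contra hcon
    rw [Filter.not_eventually] at hcon
    obtain ⟨φ, hφmono, hφ⟩ :=
      Filter.extraction_of_frequently_atTop (hcon.mono fun k hk => not_lt.1 hk)
    have h0 : ∀ j, tmin (pert s e (φ j)) ∈ Icc (0:ℝ) a := fun j =>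
      ⟨tmin_nonneg (pert_expBounded s he _), hφ j⟩
    obtain ⟨L, hL, ψ, hψmono, hψ⟩ := isCompact_Icc.tendsto_subseq h0
    have hsToS : Tendsto (fun j => pert s e (φ (ψ j))) atTop (𝓝 s) :=
      (pert_tendsto s e).comp ((hφmono.comp hψmono).tendsto_atTop)
    have hpair : Tendsto
        (fun j => (tmin (pert s e (φ (ψ j))), pert s e (φ (ψ j)))) atTop (𝓝 (L, s)) :=
      Filter.Tendsto.prodMk_nhds hψ hsToS
    have hJ : (L, s) ∈ JF :=
      isClosed_JF.mem_of_tendsto hpair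
        (Filter.Eventually.of_forall fun j => tmin_mem (pert_expBounded s he _))
    exact absurd (tmin_le hJ) (not_le.2 (lt_of_le_of_lt hL.2 ha))
  · intro b hb
    obtain ⟨K, hK⟩ := JF_pert hmem (δ := (b - tmin s)/2) (by linarith) he
    filter_upwards [eventually_ge_atTop K] with k hk
    have := tmin_le (hK k hk)
    linarith

lemma lexLt_zero_le {a b : Addr} (h : lexLt a b) : a 0 ≤ b 0 := by
  obtain ⟨n, hag, hlt⟩ := h
  rcases Nat.eq_zero_or_pos n with h0 | h0
  · subst h0; exact hlt.le
  · exact (hag 0 h0).le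

lemma finite_ball (r : ℝ) : Set.Finite {z : ℤ | 2 * Real.pi * |(z : ℝ)| ≤ r} := by
  refine (Set.finite_Icc (-(⌈r⌉)) ⌈r⌉).subset fun z hz => ?_
  have h1 : |(z:ℝ)| ≤ r := by
    have hpi : (1:ℝ) ≤ 2 * Real.pi := by nlinarith [Real.pi_gt_three]
    have h0 := abs_nonneg ((z:ℝ))
    have hz' : 2 * Real.pi * |(z:ℝ)| ≤ r := hz
    nlinarith [mul_le_mul_of_nonneg_right hpi h0]
  have h2 : (|z| : ℤ) ≤ ⌈r⌉ := by
    have : ((|z| : ℤ) : ℝ) ≤ (⌈r⌉ : ℝ) := by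
      push_cast
      exact h1.trans (Int.le_ceil r)
    exact_mod_cast this
  have := abs_le.1 h2
  exact ⟨this.1, this.2⟩

open Classical in
noncomputable def tfunAux (α : Addr → ℝ) (y : ℝ) : EReal :=
  if h : ∃ s, α s = y ∧ ExpBounded s then ((tmin h.choose : ℝ) : EReal) else ⊤

lemma tfunAux_eq {α : Addr → ℝ} (hinj : Function.Injective α) {s : Addr}
    (hs : ExpBounded s) : tfunAux α (α s) = ((tmin s : ℝ) : EReal) := by
  have h : ∃ s', α s' = α s ∧ ExpBounded s' := ⟨s, rfl, hs⟩
  have hc : h.choose = s := hinj h.choose_spec.1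
  unfold tfunAux
  rw [dif_pos h, hc]

lemma tfunAux_le {α : Addr → ℝ} {y t : ℝ} (h : tfunAux α y ≤ (t : EReal)) :
    ∃ s, α s = y ∧ ExpBounded s ∧ tmin s ≤ t := by
  unfold tfunAux at h
  split_ifs at h with hh
  · exact ⟨hh.choose, hh.choose_spec.1, hh.choose_spec.2, by exact_mod_cast h⟩
  · exact absurd h (not_le.2 (EReal.coe_lt_top t))


end Brush

open Brush

/-- **The model is a straight brush.** If `α : ℤ^ℕ → ℝ ∖ ℚ` is any order-preserving
homeomorphism onto the irrationals, then the image of `J(𝓕)` under `(t, s) ↦ (t, α(s))`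
is a straight brush in `ℝ²`. -/
theorem model_is_straight_brush (α : Addr → ℝ)
    (hirr : ∀ s, Irrational (α s))
    (hinj : Function.Injective α)
    (hsurj : ∀ y : ℝ, Irrational y → ∃ s, α s = y)
    (horder : ∀ a b : Addr, lexLt a b ↔ α a < α b)
    (hcont : Continuous α)
    (hinv : ∀ U : Set Addr, IsOpen U → ∃ V : Set ℝ, IsOpen V ∧ α '' U = V ∩ {y | Irrational y}) :
    IsStraightBrush {p : ℝ × ℝ | ∃ t s, (t, s) ∈ JF ∧ p = (t, α s)} := by
  classical
  have hainv : ∀ (u : ℕ → Addr) (s : Addr),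
      Tendsto (fun k => α (u k)) atTop (𝓝 (α s)) → Tendsto u atTop (𝓝 s) := by
    intro u s h
    rw [tendsto_nhds]
    intro U hU hsU
    obtain ⟨V, hV, hVU⟩ := hinv U hU
    have hy : α s ∈ V := by
      have hm : α s ∈ α '' U := ⟨s, hsU, rfl⟩
      rw [hVU] at hm; exact hm.1
    have hev : ∀ᶠ k in atTop, α (u k) ∈ V := h (hV.mem_nhds hy)
    filter_upwards [hev] with k hk
    have hmem : α (u k) ∈ V ∩ {y | Irrational y} := ⟨hk, hirr _⟩
    rw [← hVU] at hmem
    obtain ⟨w, hwU, hw⟩ := hmem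
    rwa [hinj hw] at hwU
  refine ⟨tfunAux α, ?_, ?_, ?_, ?_, ?_⟩
  · -- nonnegativity
    intro y
    unfold tfunAux
    split_ifs with h
    · exact EReal.coe_nonneg.2 (tmin_nonneg h.choose_spec.2)
    · exact le_top
  · -- membership characterization
    intro t y
    constructor
    · rintro ⟨t', s, hJ, heq⟩
      rw [Prod.mk.injEq] at heq
      obtain ⟨h1, h2⟩ := heq
      subst h1
      refine ⟨h2 ▸ hirr s, ?_⟩
      rw [h2, tfunAux_eq hinj ⟨t, hJ⟩]
      exact EReal.coe_le_coe_iff.2 (tmin_le hJ)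
    · rintro ⟨hy, hle⟩
      obtain ⟨s, rfl, hEB, hts⟩ := tfunAux_le hle
      exact ⟨t, s, JF_up (tmin_mem hEB) hts, rfl⟩
  · -- density
    refine dense_of_exists_between fun a b hab => ?_
    obtain ⟨y₁, hy₁, ha1, hb1⟩ := exists_irrational_btwn hab
    obtain ⟨y₂, hy₂, h12, hb2⟩ := exists_irrational_btwn hb1
    obtain ⟨s₁, hs₁⟩ := hsurj y₁ hy₁
    obtain ⟨s₂, hs₂⟩ := hsurj y₂ hy₂
    obtain ⟨n, hagree, hlt⟩ : lexLt s₁ s₂ := (horder s₁ s₂).2 (by rw [hs₁, hs₂]; exact h12)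
    set s' : Addr := fun m => if m ≤ n then s₁ m else if m = n+1 then s₁ (n+1) + 1 else 0
      with hs'
    have hEB : ExpBounded s' := by
      refine expBounded_of_bdd (N := (∑ j ∈ Finset.range (n+2), |(s₁ j : ℝ)|) + 1) ?_
      intro m
      have hsum : ∀ j, j ≤ n+1 → |(s₁ j : ℝ)| ≤ ∑ j ∈ Finset.range (n+2), |(s₁ j : ℝ)| :=
        fun j hj => Finset.single_le_sum (f := fun j => |(s₁ j : ℝ)|)
          (fun i _ => abs_nonneg _) (Finset.mem_range.2 (by omega))
      have hnn : (0:ℝ) ≤ ∑ j ∈ Finset.range (n+2), |(s₁ j : ℝ)| :=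
        Finset.sum_nonneg fun i _ => abs_nonneg _
      rw [hs']
      dsimp only
      split_ifs with h1 h2
      · linarith [hsum m (by omega)]
      · subst h2
        push_cast
        calc |(s₁ (n+1) : ℝ) + 1| ≤ |(s₁ (n+1) : ℝ)| + 1 := by
              simpa using abs_add_le (s₁ (n+1) : ℝ) 1
          _ ≤ _ := by linarith [hsum (n+1) le_rfl]
      · simp; linarith
    have hlex1 : lexLt s₁ s' := by
      refine ⟨n+1, fun m hm => ?_, ?_⟩
      · rw [hs']; simp [show m ≤ n by omega]
      · rw [hs']; simp
    have hlex2 : lexLt s' s₂ := by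
      refine ⟨n, fun m hm => ?_, ?_⟩
      · rw [hs']; simp only [if_pos (show m ≤ n by omega)]; exact hagree m hm
      · rw [hs']; simpa using hlt
    refine ⟨α s', ?_, ?_, ?_⟩
    · show tfunAux α (α s') < ⊤
      rw [tfunAux_eq hinj hEB]
      exact EReal.coe_lt_top _
    · calc a < y₁ := ha1
        _ = α s₁ := hs₁.symm
        _ < α s' := (horder _ _).1 hlex1
    · calc α s' < α s₂ := (horder _ _).1 hlex2
        _ = y₂ := hs₂
        _ < b := hb2
  · -- hairiness
    intro y hy
    have hpos : ∃ s, α s = y ∧ ExpBounded s := by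
      by_contra h
      unfold tfunAux at hy
      rw [dif_neg h] at hy
      exact lt_irrefl _ hy
    obtain ⟨s, rfl, hsEB⟩ := hpos
    have hem : |(-1 : ℤ)| ≤ 1 := by norm_num
    have hep : |(1 : ℤ)| ≤ 1 := by norm_num
    constructor
    · refine ⟨fun k => α (pert s (-1) k), ?_, ?_, ?_, ?_⟩
      · intro k l hkl
        refine (horder _ _).1 ⟨k, fun m hm => ?_, ?_⟩
        · simp [pert, hm, hm.trans hkl]
        · have e1 : pert s (-1) k k = s k + -1 := by simp [pert]
          have e2 : pert s (-1) l k = s k := by simp [pert, hkl]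
          rw [e1, e2]; omega
      · exact (hcont.tendsto s).comp (pert_tendsto s (-1))
      · intro k
        refine (horder _ _).1 ⟨k, fun m hm => ?_, ?_⟩
        · simp [pert, hm]
        · have e1 : pert s (-1) k k = s k + -1 := by simp [pert]
          rw [e1]; omega
      · have heq : (fun k => tfunAux α (α (pert s (-1) k)))
            = fun k => ((tmin (pert s (-1) k) : ℝ) : EReal) :=
          funext fun k => tfunAux_eq hinj (pert_expBounded s hem k)
        rw [heq, tfunAux_eq hinj hsEB]
        exact EReal.tendsto_coe.2 (tmin_tendsto hsEB hem)
    · refine ⟨fun k => α (pert s 1 k), ?_, ?_, ?_, ?_⟩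
      · intro k l hkl
        refine (horder _ _).1 ⟨k, fun m hm => ?_, ?_⟩
        · simp [pert, hm, hm.trans hkl]
        · have e1 : pert s 1 k k = s k + 1 := by simp [pert]
          have e2 : pert s 1 l k = s k := by simp [pert, hkl]
          rw [e1, e2]; omega
      · exact (hcont.tendsto s).comp (pert_tendsto s 1)
      · intro k
        refine (horder _ _).1 ⟨k, fun m hm => ?_, ?_⟩
        · simp [pert, hm]
        · have e1 : pert s 1 k k = s k + 1 := by simp [pert]
          rw [e1]; omega
      · have heq : (fun k => tfunAux α (α (pert s 1 k)))
            = fun k => ((tmin (pert s 1 k) : ℝ) : EReal) :=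
          funext fun k => tfunAux_eq hinj (pert_expBounded s hep k)
        rw [heq, tfunAux_eq hinj hsEB]
        exact EReal.tendsto_coe.2 (tmin_tendsto hsEB hep)
  · -- closedness
    apply IsSeqClosed.isClosed
    intro x p hx hlim
    choose tn sn hJn hxn using hx
    have h1 : Tendsto (fun n => tn n) atTop (𝓝 p.1) := by
      have h := (continuous_fst.tendsto p).comp hlim
      refine h.congr fun n => ?_
      simp [Function.comp, hxn n]
    have h2 : Tendsto (fun n => α (sn n)) atTop (𝓝 p.2) := by
      have h := (continuous_snd.tendsto p).comp hlim
      refine h.congr fun n => ?_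
      simp [Function.comp, hxn n]
    obtain ⟨z, hz, hz1, hz2⟩ := exists_irrational_btwn (lt_add_one p.2)
    obtain ⟨w, hw, hw1, hw2⟩ := exists_irrational_btwn (sub_one_lt p.2)
    obtain ⟨u, hu⟩ := hsurj z hz
    obtain ⟨v, hv⟩ := hsurj w hw
    have E1 : ∀ᶠ n in atTop, tn n ≤ p.1 + 1 := h1.eventually_le_const (lt_add_one p.1)
    have E2 : ∀ᶠ n in atTop, α (sn n) < α u := by
      rw [hu]; exact h2.eventually_lt_const hz1
    have E3 : ∀ᶠ n in atTop, α v < α (sn n) := by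
      rw [hv]; exact h2.eventually_const_lt hw2
    obtain ⟨N, hN⟩ := eventually_atTop.1 ((E1.and E2).and E3)
    set C : ℕ → Set ℤ := fun m => Nat.casesOn m (Icc (v 0) (u 0))
      (fun j => {z : ℤ | 2 * Real.pi * |(z:ℝ)| ≤ G^[j+1] (p.1+1)}) with hC
    have hKc : IsCompact (Set.pi univ C) := by
      refine isCompact_univ_pi fun m => ?_
      cases m with
      | zero => exact (Set.finite_Icc _ _).isCompact
      | succ j => exact (finite_ball _).isCompact
    have hmemK : ∀ n, sn (n + N) ∈ Set.pi univ C := by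
      intro n m _
      obtain ⟨⟨hA, hB⟩, hCc⟩ := hN (n+N) (by omega)
      cases m with
      | zero =>
        exact ⟨lexLt_zero_le ((horder v _).2 hCc), lexLt_zero_le ((horder _ u).2 hB)⟩
      | succ j =>
        show 2 * Real.pi * |(sn (n+N) (j+1) : ℝ)| ≤ G^[j+1] (p.1+1)
        exact (entry_bound (hJn (n+N)) j).trans (Giter_mono (j+1) hA)
    obtain ⟨sstar, hsK, hαs⟩ : p.2 ∈ α '' (Set.pi univ C) := by
      refine (hKc.image hcont).isClosed.mem_of_tendsto
        (h2.comp (tendsto_add_atTop_nat N))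
        (Eventually.of_forall fun n => ⟨_, hmemK n, rfl⟩)
    have hconv : Tendsto (fun n => sn (n + N)) atTop (𝓝 sstar) := by
      apply hainv
      rw [hαs]
      exact h2.comp (tendsto_add_atTop_nat N)
    have hpair : Tendsto (fun n => (tn (n+N), sn (n+N))) atTop (𝓝 (p.1, sstar)) :=
      (h1.comp (tendsto_add_atTop_nat N)).prodMk_nhds hconv
    have hmem : (p.1, sstar) ∈ JF :=
      isClosed_JF.mem_of_tendsto hpair (Eventually.of_forall fun n => hJn (n+N))
    exact ⟨p.1, sstar, hmem, by rw [hαs]⟩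


end
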